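/- arXiv:1607.01861 — 2 statements merged into one kernel-verified Lean document; each statement's English description precedes it below -/
import Mathlib

section
/- If |v_i|² ≥ I_i for every index i, then the MLP Hessian matrix H^{MLP} is positive semidefinite. -/
open scoped ComplexOrder

noncomputable def mlpHessian {N : ℕ} (U : Matrix (Fin N) (Fin N) ℂ)
    (u : Fin N → ℂ) (I : Fin N → ℝ) (ε : ℝ) :
    Matrix (Fin N ⊕ Fin N) (Fin N ⊕ Fin N) ℂ :=
  let v : Fin N → ℂ := U.mulVec u
  let r : Fin N → ℝ := fun i => 1 - ε ^ 2 * I i / (‖v i‖ ^ 2 + ε ^ 2) ^ 2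
  let c : Fin N → ℂ := fun i =>
    (I i : ℂ) * (v i) ^ 2 / (((‖v i‖ ^ 2 + ε ^ 2) ^ 2 : ℝ) : ℂ)
  Matrix.fromBlocks
    (star U * Matrix.diagonal (fun i => (r i : ℂ)) * U)
    (star U * Matrix.diagonal c * star U)
    (U * Matrix.diagonal (fun i => star (c i)) * U)
    (U * Matrix.diagonal (fun i => (r i : ℂ)) * star U)

lemma quad_term_nonneg (r : ℝ) (c : ℂ) (h : ‖c‖ ≤ r) (a b : ℂ) :
    0 ≤ (starRingEnd ℂ) a * ((r : ℂ) * a + c * b) +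
        (starRingEnd ℂ) b * ((starRingEnd ℂ) c * a + (r : ℂ) * b) := by
  set z : ℂ := c * (starRingEnd ℂ) a * b with hz
  have key : (starRingEnd ℂ) a * ((r : ℂ) * a + c * b) +
      (starRingEnd ℂ) b * ((starRingEnd ℂ) c * a + (r : ℂ) * b) =
      ((r * Complex.normSq a + r * Complex.normSq b + 2 * z.re : ℝ) : ℂ) := by
    have h1 : (starRingEnd ℂ) a * a = (Complex.normSq a : ℂ) := by
      rw [mul_comm]; exact Complex.mul_conj a
    have h2 : (starRingEnd ℂ) b * b = (Complex.normSq b : ℂ) := by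
      rw [mul_comm]; exact Complex.mul_conj b
    have h3 : z + (starRingEnd ℂ) z = ((2 * z.re : ℝ) : ℂ) := by
      rw [Complex.add_conj]
    calc (starRingEnd ℂ) a * ((r : ℂ) * a + c * b) +
        (starRingEnd ℂ) b * ((starRingEnd ℂ) c * a + (r : ℂ) * b)
        = (r : ℂ) * ((starRingEnd ℂ) a * a) + (r : ℂ) * ((starRingEnd ℂ) b * b) +
          (z + (starRingEnd ℂ) z) := by
          simp only [hz, map_mul, Complex.conj_conj]; ring
      _ = ((r * Complex.normSq a + r * Complex.normSq b + 2 * z.re : ℝ) : ℂ) := by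
          rw [h1, h2, h3]; push_cast; ring
  rw [key, Complex.zero_le_real]
  have hre : -‖z‖ ≤ z.re := (abs_le.1 (Complex.abs_re_le_norm z)).1
  have habs : ‖z‖ = ‖c‖ * ‖a‖ * ‖b‖ := by
    simp [hz, map_mul]
  have hna : Complex.normSq a = ‖a‖ ^ 2 := (Complex.sq_norm a).symm
  have hnb : Complex.normSq b = ‖b‖ ^ 2 := (Complex.sq_norm b).symm
  have h0a : 0 ≤ ‖a‖ := norm_nonneg a
  have h0b : 0 ≤ ‖b‖ := norm_nonneg b
  have h0c : 0 ≤ ‖c‖ := norm_nonneg c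
  nlinarith [sq_nonneg (‖a‖ - ‖b‖), sq_nonneg (‖a‖ + ‖b‖)]

/-- if `|vᵢ|² ≥ Iᵢ` for every `i`, then the MLP Hessian is
positive semidefinite. -/
theorem mlpHessian_posSemidef {N : ℕ} (hN : 0 < N)
    (U : Matrix (Fin N) (Fin N) ℂ) (hU : star U * U = 1 ∧ U * star U = 1)
    (u : Fin N → ℂ) (I : Fin N → ℝ) (hI : ∀ i, 0 ≤ I i)
    (ε : ℝ) (hε : 0 < ε)
    (hdom : ∀ i, I i ≤ ‖U.mulVec u i‖ ^ 2) :
    (mlpHessian U u I ε).PosSemidef := by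
  set v : Fin N → ℂ := U.mulVec u with hv
  set r : Fin N → ℝ := fun i => 1 - ε ^ 2 * I i / ((‖v i‖) ^ 2 + ε ^ 2) ^ 2 with hr
  set c : Fin N → ℂ := fun i =>
    (I i : ℂ) * (v i) ^ 2 / ((((‖v i‖) ^ 2 + ε ^ 2) ^ 2 : ℝ) : ℂ) with hc
  have hkey : ∀ i, ‖c i‖ ≤ r i := by
    intro i
    have hd : 0 < (‖v i‖) ^ 2 + ε ^ 2 := by positivity
    have habsc : ‖c i‖ = I i * (‖v i‖) ^ 2 /
        ((‖v i‖) ^ 2 + ε ^ 2) ^ 2 := by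
      simp only [hc, norm_div, norm_mul, norm_pow, Complex.norm_real, Real.norm_eq_abs]
      rw [abs_of_nonneg (hI i), abs_of_nonneg (le_of_lt (by positivity))]
    rw [habsc, hr]
    have hIle : I i ≤ (‖v i‖) ^ 2 + ε ^ 2 := le_trans (hdom i) (by nlinarith)
    have hsum : ε ^ 2 * I i / ((‖v i‖) ^ 2 + ε ^ 2) ^ 2 +
        I i * (‖v i‖) ^ 2 / ((‖v i‖) ^ 2 + ε ^ 2) ^ 2 ≤ 1 := by
      rw [← add_div, div_le_one (by positivity)]
      nlinarith [hI i, sq_nonneg (‖v i‖)]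
    linarith
  set K : Matrix (Fin N ⊕ Fin N) (Fin N ⊕ Fin N) ℂ :=
    Matrix.fromBlocks (Matrix.diagonal (fun i => (r i : ℂ))) (Matrix.diagonal c)
      (Matrix.diagonal (fun i => star (c i))) (Matrix.diagonal (fun i => (r i : ℂ))) with hK
  have hKps : K.PosSemidef := by
    rw [Matrix.posSemidef_iff_dotProduct_mulVec]
    constructor
    · rw [hK, Matrix.isHermitian_fromBlocks_iff]
      refine ⟨Matrix.isHermitian_diagonal_of_self_adjoint _ ?_, ?_, ?_,
        Matrix.isHermitian_diagonal_of_self_adjoint _ ?_⟩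
      · funext i; simp [Pi.star_apply, Complex.star_def, Complex.conj_ofReal]
      · rw [Matrix.diagonal_conjTranspose]; rfl
      · ext i j
        simp only [Matrix.conjTranspose_apply, Matrix.diagonal_apply]
        rcases eq_or_ne i j with h | h
        · subst h; simp
        · simp [h, Ne.symm h]
      · funext i; simp [Pi.star_apply, Complex.star_def, Complex.conj_ofReal]
    · intro x
      have hmv : K.mulVec x = Sum.elim
          (fun i => (r i : ℂ) * x (Sum.inl i) + c i * x (Sum.inr i))
          (fun i => (starRingEnd ℂ) (c i) * x (Sum.inl i) + (r i : ℂ) * x (Sum.inr i)) := by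
        funext p
        cases p with
        | inl i =>
          simp [hK, Matrix.mulVec, dotProduct, Fintype.sum_sum_type,
            Matrix.diagonal_apply, ite_mul, Finset.sum_ite_eq, Complex.star_def]
        | inr i =>
          simp [hK, Matrix.mulVec, dotProduct, Fintype.sum_sum_type,
            Matrix.diagonal_apply, ite_mul, Finset.sum_ite_eq, Complex.star_def]
      rw [hmv]
      have hdp : dotProduct (star x) (Sum.elim
          (fun i => (r i : ℂ) * x (Sum.inl i) + c i * x (Sum.inr i))
          (fun i => (starRingEnd ℂ) (c i) * x (Sum.inl i) + (r i : ℂ) * x (Sum.inr i)))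
          = ∑ i : Fin N, ((starRingEnd ℂ) (x (Sum.inl i)) *
              ((r i : ℂ) * x (Sum.inl i) + c i * x (Sum.inr i)) +
            (starRingEnd ℂ) (x (Sum.inr i)) *
              ((starRingEnd ℂ) (c i) * x (Sum.inl i) + (r i : ℂ) * x (Sum.inr i))) := by
        simp [dotProduct, Fintype.sum_sum_type, Finset.sum_add_distrib,
          Complex.star_def]
      rw [hdp]
      exact Finset.sum_nonneg fun i _ => quad_term_nonneg (r i) (c i) (hkey i)
          (x (Sum.inl i)) (x (Sum.inr i))
  set M : Matrix (Fin N ⊕ Fin N) (Fin N ⊕ Fin N) ℂ :=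
    Matrix.fromBlocks U 0 0 (star U) with hM
  have hml : mlpHessian U u I ε = Matrix.fromBlocks
      (star U * Matrix.diagonal (fun i => (r i : ℂ)) * U)
      (star U * Matrix.diagonal c * star U)
      (U * Matrix.diagonal (fun i => star (c i)) * U)
      (U * Matrix.diagonal (fun i => (r i : ℂ)) * star U) := rfl
  have hfac : mlpHessian U u I ε = M.conjTranspose * K * M := by
    rw [hml, hM, hK]
    simp only [Matrix.fromBlocks_conjTranspose, Matrix.conjTranspose_zero,
      Matrix.fromBlocks_multiply, Matrix.mul_zero, Matrix.zero_mul, add_zero, zero_add,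
      Matrix.star_eq_conjTranspose, Matrix.conjTranspose_conjTranspose]
  rw [hfac]
  exact hKps.conjTranspose_mul_mul_same M
end

section
/- The LS objective J̃ is Fréchet differentiable at every u ∈ ℂ^N (ℂ^N regarded as a real normed space), with derivative DJ̃(u)(h) = 2 Re⟨G̃(u), h⟩ for all h ∈ ℂ^N, where ⟨x, y⟩ = Σᵢ x̄ᵢ yᵢ is the standard Hermitian inner product on ℂ^N. -/
open Complex Finset Matrix

/-- The LS objective `J̃(u) = Σᵢ (|(Uu)ᵢ|² − 2 Mᵢ √(|(Uu)ᵢ|² + ε²))`. -/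
noncomputable def lsObj {N : ℕ} (U : Matrix (Fin N) (Fin N) ℂ)
    (M : Fin N → ℝ) (ε : ℝ) (u : EuclideanSpace ℂ (Fin N)) : ℝ :=
  ∑ i : Fin N,
    (‖U.mulVec u i‖ ^ 2 -
      2 * M i * Real.sqrt (‖U.mulVec u i‖ ^ 2 + ε ^ 2))

/-- The complex-gradient map of the LS objective:
`G̃(u) = u − U* w̃(u)` with `w̃(u)ᵢ = Mᵢ (Uu)ᵢ/√(|(Uu)ᵢ|²+ε²)`. -/
noncomputable def lsGrad {N : ℕ} (U : Matrix (Fin N) (Fin N) ℂ)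
    (M : Fin N → ℝ) (ε : ℝ) (u : EuclideanSpace ℂ (Fin N)) :
    EuclideanSpace ℂ (Fin N) :=
  let w : EuclideanSpace ℂ (Fin N) := WithLp.toLp 2 ((star U).mulVec fun i =>
    (M i : ℂ) * U.mulVec u i /
      ((Real.sqrt (‖U.mulVec u i‖ ^ 2 + ε ^ 2) : ℝ) : ℂ))
  u - w

noncomputable def coordMap {N : ℕ} (U : Matrix (Fin N) (Fin N) ℂ) (i : Fin N) :
    EuclideanSpace ℂ (Fin N) →L[ℝ] ℂ :=
  LinearMap.toContinuousLinearMap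
  { toFun := fun v => U.mulVec v i
    map_add' := by
      intro v w
      show U.mulVec (fun j => v j + w j) i = U.mulVec v i + U.mulVec w i
      simp [Matrix.mulVec, dotProduct, mul_add, Finset.sum_add_distrib]
    map_smul' := by
      intro r v
      simp only [RingHom.id_apply, Matrix.mulVec, dotProduct]
      rw [Finset.smul_sum]
      congr 1; funext j
      show U i j * (r • v j) = r • (U i j * v j)
      rw [mul_smul_comm] }

lemma coordMap_apply {N : ℕ} (U : Matrix (Fin N) (Fin N) ℂ) (i : Fin N)
    (v : EuclideanSpace ℂ (Fin N)) : coordMap U i v = U.mulVec v i := rfl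

noncomputable def dq (c : ℂ) : ℂ →L[ℝ] ℝ :=
  (c.re • Complex.reCLM + c.re • Complex.reCLM) + (c.im • Complex.imCLM + c.im • Complex.imCLM)

lemma hasFDerivAt_abs_sq (c : ℂ) :
    HasFDerivAt (fun w : ℂ => ‖w‖ ^ 2) (dq c) c := by
  have he : (fun w : ℂ => ‖w‖ ^ 2) = fun w => w.re * w.re + w.im * w.im := by
    funext w; rw [Complex.sq_norm, Complex.normSq_apply]
  rw [he]
  exact ((Complex.reCLM.hasFDerivAt.mul Complex.reCLM.hasFDerivAt).add
    (Complex.imCLM.hasFDerivAt.mul Complex.imCLM.hasFDerivAt))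

lemma dq_apply (c x : ℂ) : dq c x = 2 * (c.re * x.re + c.im * x.im) := by
  simp [dq]; ring

lemma dot1 {N : ℕ} (U : Matrix (Fin N) (Fin N) ℂ) (hU : star U * U = 1)
    (v w : Fin N → ℂ) :
    ∑ i, (starRingEnd ℂ) (v i) * w i
      = ∑ i, (starRingEnd ℂ) (U.mulVec v i) * U.mulVec w i := by
  have : star (U.mulVec v) ⬝ᵥ (U.mulVec w) = star v ⬝ᵥ w := by
    rw [Matrix.star_mulVec, Matrix.dotProduct_mulVec, Matrix.vecMul_vecMul,
      ← Matrix.star_eq_conjTranspose, hU, Matrix.vecMul_one]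
  simpa [dotProduct, Pi.star_apply] using this.symm

lemma dot2 {N : ℕ} (U : Matrix (Fin N) (Fin N) ℂ) (w h : Fin N → ℂ) :
    ∑ j, (starRingEnd ℂ) ((star U).mulVec w j) * h j
      = ∑ i, (starRingEnd ℂ) (w i) * U.mulVec h i := by
  have : star ((star U).mulVec w) ⬝ᵥ h = star w ⬝ᵥ (U.mulVec h) := by
    rw [Matrix.star_mulVec, Matrix.dotProduct_mulVec]
    congr 1
    simp [Matrix.star_eq_conjTranspose]
  simpa [dotProduct, Pi.star_apply] using this

/-- the LS objective is Fréchet differentiable (over `ℝ`) at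
every `u`, with derivative `h ↦ 2 Re⟪G̃(u), h⟫`. -/
theorem lsObj_hasFDerivAt {N : ℕ} (hN : 0 < N)
    (U : Matrix (Fin N) (Fin N) ℂ) (hU : star U * U = 1 ∧ U * star U = 1)
    (M : Fin N → ℝ) (hM : ∀ i, 0 ≤ M i) (ε : ℝ) (hε : 0 < ε) :
    ∀ u : EuclideanSpace ℂ (Fin N),
      ∃ D : EuclideanSpace ℂ (Fin N) →L[ℝ] ℝ,
        HasFDerivAt (lsObj U M ε) D u ∧
        ∀ h : EuclideanSpace ℂ (Fin N),
          D h = 2 * (inner ℂ (lsGrad U M ε u) h : ℂ).re := by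
  intro u
  set z : Fin N → ℂ := U.mulVec u with hz
  set s : Fin N → ℝ := fun i => Real.sqrt (‖z i‖ ^ 2 + ε ^ 2) with hs
  have hspos : ∀ i, 0 < s i := fun i =>
    Real.sqrt_pos.mpr (by positivity)
  refine ⟨∑ i : Fin N,
      ((dq (z i)).comp (coordMap U i)
        - (2 * M i) • ((1 / (2 * s i)) • ((dq (z i)).comp (coordMap U i)))), ?_, ?_⟩
  · -- differentiability
    have hterm : ∀ i : Fin N, HasFDerivAt
        (fun v : EuclideanSpace ℂ (Fin N) =>
          ‖U.mulVec v i‖ ^ 2 -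
            2 * M i * Real.sqrt (‖U.mulVec v i‖ ^ 2 + ε ^ 2))
        ((dq (z i)).comp (coordMap U i)
          - (2 * M i) • ((1 / (2 * s i)) • ((dq (z i)).comp (coordMap U i)))) u := by
      intro i
      have hzd : HasFDerivAt (fun v : EuclideanSpace ℂ (Fin N) => U.mulVec v i)
          (coordMap U i) u := (coordMap U i).hasFDerivAt
      have hA : HasFDerivAt (fun v : EuclideanSpace ℂ (Fin N) => ‖U.mulVec v i‖ ^ 2)
          ((dq (z i)).comp (coordMap U i)) u :=
        by have := (hasFDerivAt_abs_sq (z i)).comp u hzd; exact this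
      have hin : HasFDerivAt
          (fun v : EuclideanSpace ℂ (Fin N) => ‖U.mulVec v i‖ ^ 2 + ε ^ 2)
          ((dq (z i)).comp (coordMap U i)) u := hA.add_const _
      have hne : ‖z i‖ ^ 2 + ε ^ 2 ≠ 0 := by positivity
      have hsq := (Real.hasDerivAt_sqrt hne).comp_hasFDerivAt u hin
      exact hA.sub (hsq.const_mul (2 * M i))
    have := HasFDerivAt.sum (fun i (_ : i ∈ Finset.univ) => hterm i)
    have e : lsObj U M ε = ∑ i : Fin N, fun v : EuclideanSpace ℂ (Fin N) =>
        ‖U.mulVec v i‖ ^ 2 - 2 * M i * Real.sqrt (‖U.mulVec v i‖ ^ 2 + ε ^ 2) := by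
      funext v
      simp only [lsObj, Finset.sum_apply]
    rw [e]
    exact this
  · -- formula
    intro h
    set ζ : Fin N → ℂ := U.mulVec h with hζ
    have hinner : (inner ℂ (lsGrad U M ε u) h : ℂ)
        = ∑ i, ((starRingEnd ℂ) (z i)
            - (starRingEnd ℂ) ((M i : ℂ) * z i / ((s i : ℝ) : ℂ))) * ζ i := by
      have e1 : (inner ℂ (lsGrad U M ε u) h : ℂ)
          = ∑ j, (starRingEnd ℂ) (u j) * h j
            - ∑ j, (starRingEnd ℂ)
                (((star U).mulVec fun i => (M i : ℂ) * z i / ((s i : ℝ) : ℂ)) j) * h j := by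
        simp only [lsGrad]
        rw [inner_sub_left]
        simp only [PiLp.inner_apply, RCLike.inner_apply', PiLp.toLp_apply]
        rfl
      rw [e1, dot1 U hU.1 u h, dot2]
      rw [← Finset.sum_sub_distrib]
      congr 1; funext i
      ring
    rw [hinner]
    rw [Complex.re_sum]
    rw [Finset.mul_sum]
    rw [ContinuousLinearMap.sum_apply]
    refine Finset.sum_congr rfl fun i _ => ?_
    have hcw : (starRingEnd ℂ) ((M i : ℂ) * z i / ((s i : ℝ) : ℂ))
        = ((M i / s i : ℝ) : ℂ) * (starRingEnd ℂ) (z i) := by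
      rw [map_div₀, _root_.map_mul, Complex.conj_ofReal, Complex.conj_ofReal]
      push_cast
      ring
    rw [hcw]
    have hre : (((starRingEnd ℂ) (z i) - ((M i / s i : ℝ) : ℂ) * (starRingEnd ℂ) (z i)) * ζ i).re
        = ((z i).re * (ζ i).re + (z i).im * (ζ i).im)
          - (M i / s i) * ((z i).re * (ζ i).re + (z i).im * (ζ i).im) := by
      simp [Complex.mul_re, Complex.sub_re, Complex.sub_im, Complex.mul_im]
      ring
    rw [hre]
    simp only [ContinuousLinearMap.sub_apply, ContinuousLinearMap.smul_apply,
      ContinuousLinearMap.comp_apply, coordMap_apply, dq_apply, smul_eq_mul, ← hζ]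
    have hsne : s i ≠ 0 := (hspos i).ne'
    field_simp
end
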